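/- arXiv:2406.00780 — 6 statements merged into one kernel-verified Lean document; each statement's English description precedes it below -/
import Mathlib

section
/- Let N, s be natural numbers, let V be a type, and let δ : Fin N → V be a sequence whose number of mode transitions K := #{k ∈ {1,…,N−1} : δ(k) ≠ δ(k−1)} is at most K₀. Define the backward temporal shift of δ by s steps as the sequence δ_s : Fin N → V with δ_s(i) = δ(i−s) for i ≥ s and δ_s(i) = δ(0) for i < s. Then the number of time steps at which the shifted sequence differs from the original, #{i ∈ {0,…,N−1} : δ_s(i) ≠ δ(i)}, is at most K₀ · s. -/
/-!
A time step `i` at which the shifted sequence differs from the original satisfies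
`δ (i - s) ≠ δ i` (with truncated subtraction, which also covers the padded steps `i < s`),
so some mode transition `k` lies in `(i - s, i]`, i.e. `i ∈ [k, k + s)`. Hence the set of
differing steps is covered by the windows `[k, k + s)` over the at most `K₀` transitions,
each of which contains at most `s` steps.
-/

open Finset

section

variable {N : ℕ} {V : Type*} [DecidableEq V]

def transitionTimes (δ : Fin N → V) : Finset (Fin N) :=
  univ.filter fun k : Fin N =>
    0 < (k : ℕ) ∧ δ k ≠ δ ⟨(k : ℕ) - 1, lt_of_le_of_lt (Nat.sub_le _ _) k.isLt⟩

lemma exists_mem_transitionTimes_of_ne (δ : Fin N → V) {a b : Fin N} (hab : a ≤ b)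
    (hne : δ a ≠ δ b) : ∃ k ∈ transitionTimes δ, a < k ∧ k ≤ b := by
  by_contra! hnone
  have hconst : ∀ n (hn : n < N), (a : ℕ) ≤ n → n ≤ b → δ a = δ ⟨n, hn⟩ := by
    intro n
    induction n with
    | zero => intro hn ha _; exact congrArg δ (Fin.ext (Nat.le_zero.mp ha))
    | succ n ih =>
      intro hn ha hb
      rcases Nat.eq_or_lt_of_le ha with heq | hlt
      · exact congrArg δ (Fin.ext heq)
      · have hstep : δ ⟨n + 1, hn⟩ = δ ⟨n, by omega⟩ := by
          by_contra hjump
          exact (hnone ⟨n + 1, hn⟩ (by simp [transitionTimes, hjump])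
            (Fin.mk_lt_mk.mpr hlt)).not_ge (Fin.mk_le_mk.mpr hb)
        rw [hstep]
        exact ih (by omega) (by omega) (by omega)
  exact hne (hconst b b.isLt hab le_rfl)

end

lemma card_filter_mem_Ico_val_le {N : ℕ} (m s : ℕ) :
    #(univ.filter fun i : Fin N => m ≤ (i : ℕ) ∧ (i : ℕ) < m + s) ≤ s := by
  calc _ ≤ #(Ico m (m + s)) :=
        card_le_card_of_injOn Fin.val (fun i hi => by simpa using hi) Fin.val_injective.injOn
    _ = s := by simp

/-- If a sequence `δ : Fin N → V` has at most `K₀` mode transitions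
(time steps `k ≥ 1` with `δ k ≠ δ (k-1)`), then its backward temporal shift `δs`
by `s` steps (padding the first `s` positions with `δ 0`) differs from `δ` at
at most `K₀ * s` time steps. -/
theorem backward_shift_diff_card_le {N s : ℕ} {V : Type*} [DecidableEq V] (K₀ : ℕ)
    (δ δs : Fin N → V)
    (hK : ((Finset.univ : Finset (Fin N)).filter
      (fun k : Fin N => 0 < (k : ℕ) ∧
        δ k ≠ δ ⟨(k : ℕ) - 1, lt_of_le_of_lt (Nat.sub_le _ _) k.isLt⟩)).card ≤ K₀)
    (hshift₁ : ∀ i : Fin N, s ≤ (i : ℕ) →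
      δs i = δ ⟨(i : ℕ) - s, lt_of_le_of_lt (Nat.sub_le _ _) i.isLt⟩)
    (hshift₂ : ∀ i : Fin N, (i : ℕ) < s → δs i = δ ⟨0, i.pos⟩) :
    ((Finset.univ : Finset (Fin N)).filter (fun i : Fin N => δs i ≠ δ i)).card ≤ K₀ * s := by
  have hshift : ∀ i : Fin N, δs i = δ ⟨(i : ℕ) - s, lt_of_le_of_lt (Nat.sub_le _ _) i.isLt⟩ := by
    intro i
    rcases le_or_gt s i with hs | hs
    · exact hshift₁ i hs
    · simpa [Nat.sub_eq_zero_of_le hs.le] using hshift₂ i hs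
  have hcover : univ.filter (fun i : Fin N => δs i ≠ δ i) ⊆ (transitionTimes δ).biUnion
      fun k => univ.filter fun i : Fin N => (k : ℕ) ≤ i ∧ (i : ℕ) < k + s := by
    intro i hi
    rw [mem_filter, hshift] at hi
    obtain ⟨k, hk, hik, hki⟩ :=
      exists_mem_transitionTimes_of_ne δ (Fin.mk_le_mk.mpr (Nat.sub_le i s)) hi.2
    simp only [mem_biUnion, mem_filter, mem_univ, true_and]
    simp only [Fin.lt_def, Fin.le_def] at hik hki
    exact ⟨k, hk, hki, by omega⟩
  calc _ ≤ _ := card_le_card hcover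
    _ ≤ #(transitionTimes δ) * s :=
      card_biUnion_le_card_mul _ _ _ fun k _ => card_filter_mem_Ico_val_le k s
    _ ≤ K₀ * s := Nat.mul_le_mul_right s hK
end

section
/- (Lemma 1, Bound on Binary Sequence Differences.) Let δ_j : Fin N → Fin n_δ → ℝ be a binary sequence (all entries in {0,1}) with at most K mode transitions, i.e. #{k ∈ {1,…,N−1} : δ_j(k) ≠ δ_j(k−1)} ≤ K. Let δ : Fin N → Fin n_δ → ℝ be another binary sequence obtained from δ_j by first applying a temporal shift of at most s steps (i.e. there is s' ≤ s with either δ_shift(i) = δ_j(i−s') for i ≥ s' and δ_shift(i) = δ_j(0) for i < s', or δ_shift(i) = δ_j(i+s') for i ≤ N−1−s' and δ_shift(i) = δ_j(N−1) for i > N−1−s') and then modifying the values at no more than r additional time steps (#{k : δ(k) ≠ δ_shift(k)} ≤ r). Then the ℓ₂ distance between the concatenated sequences satisfies ‖δ − δ_j‖₂ ≤ √((K·s + r)·n_δ). -/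
/-- Backward temporal shift of a sequence by `s'` steps: `δ_s(i) = δ(i - s')` for
`i ≥ s'`, padding the vacated initial positions with the boundary value `δ(0)`. -/
def backShift {N : ℕ} {V : Type*} (s' : ℕ) (δ : Fin N → V) : Fin N → V := fun i =>
  if h : s' ≤ (i : ℕ) then δ ⟨(i : ℕ) - s', lt_of_le_of_lt (Nat.sub_le _ _) i.isLt⟩
  else δ ⟨0, i.pos⟩

/-- Forward temporal shift of a sequence by `s'` steps: `δ_s(i) = δ(i + s')` for
`i + s' ≤ N - 1`, padding the vacated final positions with the boundary value
`δ(N-1)`. -/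
def fwdShift {N : ℕ} {V : Type*} (s' : ℕ) (δ : Fin N → V) : Fin N → V := fun i =>
  if h : (i : ℕ) + s' < N then δ ⟨(i : ℕ) + s', h⟩
  else δ ⟨N - 1, Nat.sub_lt i.pos Nat.one_pos⟩

lemma exists_transition {N : ℕ} {V : Type*} (f : Fin N → V) :
    ∀ b a : ℕ, (ha : a < N) → (hb : b < N) → a ≤ b → f ⟨a, ha⟩ ≠ f ⟨b, hb⟩ →
    ∃ t : Fin N, a < (t : ℕ) ∧ (t : ℕ) ≤ b ∧ 0 < (t : ℕ) ∧
      f t ≠ f ⟨(t : ℕ) - 1, lt_of_le_of_lt (Nat.sub_le _ _) t.isLt⟩ := by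
  intro b
  induction b with
  | zero =>
    intro a ha hb hab hne
    interval_cases a
    exact absurd rfl hne
  | succ n ih =>
    intro a ha hb hab hne
    rcases Nat.lt_succ_iff_lt_or_eq.mp (Nat.lt_succ_of_le hab) with h | h
    · by_cases hc : f ⟨n, by omega⟩ = f ⟨n + 1, hb⟩
      · obtain ⟨t, h1, h2, h3, h4⟩ := ih a ha (by omega) (by omega) (fun he => hne (he.trans hc))
        exact ⟨t, h1, by omega, h3, h4⟩
      · refine ⟨⟨n + 1, hb⟩, by simpa using h, by simp, by simp, ?_⟩
        simpa using fun he => hc he.symm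
    · subst h; exact absurd rfl hne


lemma card_window {N s' b : ℕ} (p : Fin N → Prop) [DecidablePred p]
    (h : ∀ k, p k → b ≤ (k : ℕ) ∧ (k : ℕ) < b + s') :
    (Finset.univ.filter p).card ≤ s' := by
  have hmaps : ∀ k ∈ Finset.univ.filter p, (k : ℕ) - b ∈ Finset.range s' := by
    intro k hk
    have := h k (Finset.mem_filter.mp hk).2
    exact Finset.mem_range.mpr (by omega)
  have hinj : Set.InjOn (fun k : Fin N => (k : ℕ) - b) (Finset.univ.filter p) := by
    intro a ha c hc hac
    have h1 := h a (Finset.mem_filter.mp (Finset.mem_coe.mp ha)).2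
    have h2 := h c (Finset.mem_filter.mp (Finset.mem_coe.mp hc)).2
    have hac' : (a : ℕ) - b = (c : ℕ) - b := hac
    exact Fin.ext (by omega)
  calc (Finset.univ.filter p).card ≤ (Finset.range s').card :=
        Finset.card_le_card_of_injOn _ hmaps hinj
    _ = s' := Finset.card_range _

lemma shift_diff_card {N : ℕ} {V : Type*} [DecidableEq V] (f : Fin N → V) (s' : ℕ)
    (g : Fin N → V) (hg : g = backShift s' f ∨ g = fwdShift s' f) :
    ((Finset.univ : Finset (Fin N)).filter (fun k : Fin N => g k ≠ f k)).card ≤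
      ((Finset.univ : Finset (Fin N)).filter
        (fun k : Fin N => 0 < (k : ℕ) ∧
          f k ≠ f ⟨(k : ℕ) - 1, lt_of_le_of_lt (Nat.sub_le _ _) k.isLt⟩)).card * s' := by
  set T := ((Finset.univ : Finset (Fin N)).filter
      (fun k : Fin N => 0 < (k : ℕ) ∧
        f k ≠ f ⟨(k : ℕ) - 1, lt_of_le_of_lt (Nat.sub_le _ _) k.isLt⟩)) with hT
  rcases hg with hg | hg
  · have hgk : ∀ k : Fin N, g k = f ⟨(k : ℕ) - s', lt_of_le_of_lt (Nat.sub_le _ _) k.isLt⟩ := by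
      intro k
      rw [hg]; unfold backShift
      split
      · rfl
      · congr 1; ext; simp; omega
    have hsub : ((Finset.univ : Finset (Fin N)).filter (fun k : Fin N => g k ≠ f k)) ⊆
        T.biUnion (fun t => (Finset.univ : Finset (Fin N)).filter
          (fun k : Fin N => (t : ℕ) ≤ k ∧ (k : ℕ) < (t : ℕ) + s')) := by
      intro k hk
      have hk' : g k ≠ f k := (Finset.mem_filter.mp hk).2
      rw [hgk k] at hk'
      obtain ⟨t, h1, h2, h3, h4⟩ := exists_transition f k ((k : ℕ) - s')
        (lt_of_le_of_lt (Nat.sub_le _ _) k.isLt) k.isLt (Nat.sub_le _ _)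
        (by simpa using hk')
      refine Finset.mem_biUnion.mpr ⟨t, ?_, ?_⟩
      · rw [hT]; exact Finset.mem_filter.mpr ⟨Finset.mem_univ _, h3, h4⟩
      · exact Finset.mem_filter.mpr ⟨Finset.mem_univ _, by omega, by omega⟩
    calc _ ≤ _ := Finset.card_le_card hsub
      _ ≤ ∑ t ∈ T, ((Finset.univ : Finset (Fin N)).filter
          (fun k : Fin N => (t : ℕ) ≤ k ∧ (k : ℕ) < (t : ℕ) + s')).card :=
        Finset.card_biUnion_le
      _ ≤ ∑ _t ∈ T, s' :=
        Finset.sum_le_sum fun t _ => card_window (b := (t : ℕ)) _ (fun k hk => by omega)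
      _ = T.card * s' := by rw [Finset.sum_const, smul_eq_mul]
  · have hgk : ∀ k : Fin N, g k = f ⟨min ((k : ℕ) + s') (N - 1),
        lt_of_le_of_lt (min_le_right _ _) (Nat.sub_lt k.pos Nat.one_pos)⟩ := by
      intro k
      rw [hg]; unfold fwdShift
      split
      · congr 1; ext; simp; omega
      · congr 1; ext; simp; omega
    have hsub : ((Finset.univ : Finset (Fin N)).filter (fun k : Fin N => g k ≠ f k)) ⊆
        T.biUnion (fun t => (Finset.univ : Finset (Fin N)).filter
          (fun k : Fin N => (t : ℕ) - s' ≤ k ∧ (k : ℕ) < (t : ℕ) - s' + s')) := by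
      intro k hk
      have hk' : g k ≠ f k := (Finset.mem_filter.mp hk).2
      rw [hgk k] at hk'
      have hkN := k.isLt
      obtain ⟨t, h1, h2, h3, h4⟩ := exists_transition f (min ((k : ℕ) + s') (N - 1)) (k : ℕ)
        k.isLt (lt_of_le_of_lt (min_le_right _ _) (Nat.sub_lt k.pos Nat.one_pos))
        (le_min (Nat.le_add_right _ _) (by omega))
        (by simpa using fun he => hk' he.symm)
      have htk : (k : ℕ) < (t : ℕ) ∧ (t : ℕ) ≤ (k : ℕ) + s' := by omega
      refine Finset.mem_biUnion.mpr ⟨t, ?_, ?_⟩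
      · rw [hT]; exact Finset.mem_filter.mpr ⟨Finset.mem_univ _, h3, h4⟩
      · exact Finset.mem_filter.mpr ⟨Finset.mem_univ _, by omega, by omega⟩
    calc _ ≤ _ := Finset.card_le_card hsub
      _ ≤ ∑ t ∈ T, ((Finset.univ : Finset (Fin N)).filter
          (fun k : Fin N => (t : ℕ) - s' ≤ k ∧ (k : ℕ) < (t : ℕ) - s' + s')).card :=
        Finset.card_biUnion_le
      _ ≤ ∑ _t ∈ T, s' :=
        Finset.sum_le_sum fun t _ => card_window (b := (t : ℕ) - s') _ (fun k hk => by omega)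
      _ = T.card * s' := by rw [Finset.sum_const, smul_eq_mul]

/-- Lemma 1, Bound on Binary Sequence Differences: if `δj` is a
binary sequence with at most `K` mode transitions, and `δ` is a binary sequence
obtained from `δj` by a temporal shift of at most `s` steps (backward or forward)
followed by modifying the values at no more than `r` additional time steps, then
`‖δ − δj‖₂ ≤ √((K·s + r)·nδ)`. -/
theorem binary_seq_diff_bound {N nδ : ℕ} (K s r : ℕ)
    (δj δshift δ : Fin N → Fin nδ → ℝ)
    (hbinj : ∀ k i, δj k i = 0 ∨ δj k i = 1)
    (hbin : ∀ k i, δ k i = 0 ∨ δ k i = 1)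
    (hK : ((Finset.univ : Finset (Fin N)).filter
      (fun k : Fin N => 0 < (k : ℕ) ∧
        δj k ≠ δj ⟨(k : ℕ) - 1, lt_of_le_of_lt (Nat.sub_le _ _) k.isLt⟩)).card ≤ K)
    (s' : ℕ) (hs' : s' ≤ s)
    (hshift : δshift = backShift s' δj ∨ δshift = fwdShift s' δj)
    (hr : ((Finset.univ : Finset (Fin N)).filter
      (fun k : Fin N => δ k ≠ δshift k)).card ≤ r) :
    Real.sqrt (∑ k : Fin N, ∑ i : Fin nδ, (δ k i - δj k i) ^ 2) ≤
      Real.sqrt (((K * s + r : ℕ) : ℝ) * (nδ : ℝ)) := by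
  apply Real.sqrt_le_sqrt
  -- card of set where δ and δj differ
  set D := ((Finset.univ : Finset (Fin N)).filter (fun k : Fin N => δ k ≠ δj k)) with hD
  have hD2 := shift_diff_card δj s' δshift hshift
  have hcard : D.card ≤ K * s + r := by
    have hsub : D ⊆ ((Finset.univ : Finset (Fin N)).filter (fun k : Fin N => δ k ≠ δshift k)) ∪
        ((Finset.univ : Finset (Fin N)).filter (fun k : Fin N => δshift k ≠ δj k)) := by
      intro k hk
      simp only [hD, Finset.mem_filter, Finset.mem_univ, true_and, Finset.mem_union] at hk ⊢
      by_cases h : δ k = δshift k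
      · exact Or.inr (fun he => hk (h.trans he))
      · exact Or.inl h
    calc D.card ≤ _ := Finset.card_le_card hsub
      _ ≤ _ + _ := Finset.card_union_le _ _
      _ ≤ r + K * s := by
        have h1 : ((Finset.univ : Finset (Fin N)).filter
            (fun k : Fin N => 0 < (k : ℕ) ∧
              δj k ≠ δj ⟨(k : ℕ) - 1, lt_of_le_of_lt (Nat.sub_le _ _) k.isLt⟩)).card * s'
            ≤ K * s := Nat.mul_le_mul hK hs'
        omega
      _ = K * s + r := by omega
  have hterm : ∀ k i, (δ k i - δj k i) ^ 2 ≤ 1 := by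
    intro k i
    rcases hbin k i with h | h <;> rcases hbinj k i with h' | h' <;> rw [h, h'] <;> norm_num
  have hbound : ∀ k : Fin N, ∑ i : Fin nδ, (δ k i - δj k i) ^ 2 ≤
      if δ k ≠ δj k then (nδ : ℝ) else 0 := by
    intro k
    by_cases h : δ k = δj k
    · simp [h]
    · simp only [h, ne_eq, not_false_eq_true, if_true]
      calc ∑ i : Fin nδ, (δ k i - δj k i) ^ 2 ≤ ∑ _i : Fin nδ, (1 : ℝ) :=
            Finset.sum_le_sum fun i _ => hterm k i
        _ = (nδ : ℝ) := by simp
  calc ∑ k : Fin N, ∑ i : Fin nδ, (δ k i - δj k i) ^ 2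
      ≤ ∑ k : Fin N, if δ k ≠ δj k then (nδ : ℝ) else 0 := Finset.sum_le_sum fun k _ => hbound k
    _ = D.card * (nδ : ℝ) := by
        rw [Finset.sum_ite, Finset.sum_const_zero, add_zero, Finset.sum_const, nsmul_eq_mul]
    _ ≤ ((K * s + r : ℕ) : ℝ) * (nδ : ℝ) := by
        have : (D.card : ℝ) ≤ ((K * s + r : ℕ) : ℝ) := by exact_mod_cast hcard
        exact mul_le_mul_of_nonneg_right this (Nat.cast_nonneg _)
end

section
/- (Validity of transferred optimality cuts.) Let Q be a symmetric positive definite n×n real matrix, A an m×n real matrix, C a p×n real matrix, and x_g ∈ ℝⁿ. Let μ* ∈ ℝᵐ and π* ∈ ℝᵖ with π* ≥ 0 componentwise, and let b* ∈ ℝᵐ, d* ∈ ℝᵖ, v* ∈ ℝ be such that strong duality holds at the construction point: v* = −¼ w*ᵀQ⁻¹w* + x_gᵀw* − b*ᵀμ* − d*ᵀπ*, where w* := Aᵀμ* + Cᵀπ*. Define c* := v* + b*ᵀμ* + d*ᵀπ*. Then for every b' ∈ ℝᵐ, d' ∈ ℝᵖ and every x ∈ ℝⁿ with Ax = b' and C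 x ≤ d' (componentwise), one has c* − b'ᵀμ* − d'ᵀπ* ≤ (x − x_g)ᵀQ(x − x_g). In particular, the dual gap v(b', d') − (c* − b'ᵀμ* − d'ᵀπ*) is nonnegative whenever the subproblem with right-hand sides (b', d') is feasible, where v(b', d') denotes its optimal value. -/
/-!
With the construction-point terms absorbed into `c*`, the cut value at `(b', d')` is the Lagrangian
dual function of the subproblem with right-hand sides `(b', d')`, evaluated at `(μ*, π*)`. Weak
duality bounds it by the objective at every feasible point: the Lagrangian is a convex quadratic in
`x`, whose minimum `-¼ wᵀQ⁻¹w` is found by completing the square.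
-/

open Matrix

theorem Matrix.PosDef.neg_quarter_dotProduct_inv_mulVec_le {ι : Type*} [Fintype ι]
    [DecidableEq ι] {Q : Matrix ι ι ℝ} (hQ : Q.PosDef) (w y : ι → ℝ) :
    -(1 / 4 : ℝ) * (w ⬝ᵥ (Q⁻¹ *ᵥ w)) ≤ y ⬝ᵥ (Q *ᵥ y) + w ⬝ᵥ y := by
  set u := Q⁻¹ *ᵥ w
  have hQu : Q *ᵥ u = w := by
    rw [mulVec_mulVec, mul_nonsing_inv _ ((isUnit_iff_isUnit_det Q).mp hQ.isUnit), one_mulVec]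
  have hcross : u ⬝ᵥ (Q *ᵥ y) = w ⬝ᵥ y := by
    have := dotProduct_transpose_mulVec Q y u
    rwa [isHermitian_iff_isSymm.mp hQ.isHermitian, hQu, dotProduct_comm, eq_comm] at this
  have hsquare : 0 ≤ (y + (1 / 2 : ℝ) • u) ⬝ᵥ (Q *ᵥ (y + (1 / 2 : ℝ) • u)) :=
    hQ.posSemidef.dotProduct_mulVec_nonneg _
  simp only [mulVec_add, mulVec_smul, hQu, add_dotProduct, dotProduct_add, smul_dotProduct,
    dotProduct_smul, hcross, smul_eq_mul] at hsquare
  rw [dotProduct_comm u w, dotProduct_comm y w] at hsquare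
  linarith

section WeakDuality

variable {ι κ ν : Type*} [Fintype ι] [Fintype κ] [Fintype ν]

theorem Matrix.transpose_mulVec_add_dotProduct_le (A : Matrix κ ι ℝ) (C : Matrix ν ι ℝ)
    {x : ι → ℝ} {b : κ → ℝ} {d : ν → ℝ} (μ : κ → ℝ) {π : ν → ℝ} (hπ : 0 ≤ π)
    (hAx : A *ᵥ x = b) (hCx : C *ᵥ x ≤ d) :
    (Aᵀ *ᵥ μ + Cᵀ *ᵥ π) ⬝ᵥ x ≤ b ⬝ᵥ μ + d ⬝ᵥ π := by
  rw [add_dotProduct, dotProduct_comm, dotProduct_transpose_mulVec, hAx, dotProduct_comm _ x,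
    dotProduct_transpose_mulVec, dotProduct_comm b, dotProduct_comm d]
  exact add_le_add_right (dotProduct_le_dotProduct_of_nonneg_left hCx hπ) _

theorem quadraticProgram_weak_duality [DecidableEq ι] {Q : Matrix ι ι ℝ} (hQ : Q.PosDef)
    (A : Matrix κ ι ℝ) (C : Matrix ν ι ℝ) (xg : ι → ℝ) {x : ι → ℝ} {b : κ → ℝ} {d : ν → ℝ}
    (μ : κ → ℝ) {π : ν → ℝ} (hπ : 0 ≤ π) (hAx : A *ᵥ x = b) (hCx : C *ᵥ x ≤ d) :
    -(1 / 4 : ℝ) * ((Aᵀ *ᵥ μ + Cᵀ *ᵥ π) ⬝ᵥ (Q⁻¹ *ᵥ (Aᵀ *ᵥ μ + Cᵀ *ᵥ π)))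
        + xg ⬝ᵥ (Aᵀ *ᵥ μ + Cᵀ *ᵥ π) - b ⬝ᵥ μ - d ⬝ᵥ π
      ≤ (x - xg) ⬝ᵥ (Q *ᵥ (x - xg)) := by
  have hquad := hQ.neg_quarter_dotProduct_inv_mulVec_le (Aᵀ *ᵥ μ + Cᵀ *ᵥ π) (x - xg)
  have hpair := transpose_mulVec_add_dotProduct_le A C μ hπ hAx hCx
  rw [dotProduct_sub, dotProduct_comm _ xg] at hquad
  linarith

end WeakDuality

theorem transferred_optimality_cut_valid_general {n m p : ℕ}
    (Q : Matrix (Fin n) (Fin n) ℝ) (hQpd : Q.PosDef)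
    (A : Matrix (Fin m) (Fin n) ℝ) (C : Matrix (Fin p) (Fin n) ℝ)
    (xg : Fin n → ℝ)
    (μs : Fin m → ℝ) (πs : Fin p → ℝ) (hπ : ∀ i, 0 ≤ πs i)
    (bs : Fin m → ℝ) (ds : Fin p → ℝ) (vs : ℝ)
    (w : Fin n → ℝ) (hw : w = Aᵀ *ᵥ μs + Cᵀ *ᵥ πs)
    (hstrong : vs = -(1 / 4 : ℝ) * (w ⬝ᵥ (Q⁻¹ *ᵥ w)) + xg ⬝ᵥ w - bs ⬝ᵥ μs - ds ⬝ᵥ πs)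
    (cs : ℝ) (hcs : cs = vs + bs ⬝ᵥ μs + ds ⬝ᵥ πs) :
    (∀ (b' : Fin m → ℝ) (d' : Fin p → ℝ) (x : Fin n → ℝ),
        A *ᵥ x = b' → (∀ i, (C *ᵥ x) i ≤ d' i) →
        cs - b' ⬝ᵥ μs - d' ⬝ᵥ πs ≤ (x - xg) ⬝ᵥ (Q *ᵥ (x - xg))) ∧
      (∀ (b' : Fin m → ℝ) (d' : Fin p → ℝ) (v' : ℝ),
        IsGLB {y : ℝ | ∃ x : Fin n → ℝ, A *ᵥ x = b' ∧ (∀ i, (C *ᵥ x) i ≤ d' i) ∧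
          y = (x - xg) ⬝ᵥ (Q *ᵥ (x - xg))} v' →
        0 ≤ v' - (cs - b' ⬝ᵥ μs - d' ⬝ᵥ πs)) := by
  subst hw
  have hcut : ∀ (b' : Fin m → ℝ) (d' : Fin p → ℝ) (x : Fin n → ℝ),
      A *ᵥ x = b' → (∀ i, (C *ᵥ x) i ≤ d' i) →
      cs - b' ⬝ᵥ μs - d' ⬝ᵥ πs ≤ (x - xg) ⬝ᵥ (Q *ᵥ (x - xg)) := by
    intro b' d' x hAx hCx
    have hdual := quadraticProgram_weak_duality hQpd A C xg μs hπ hAx hCx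
    rw [hcs, hstrong]
    linarith
  refine ⟨hcut, fun b' d' v' hv' => sub_nonneg.mpr (hv'.2 ?_)⟩
  rintro _ ⟨x, hAx, hCx, rfl⟩
  exact hcut b' d' x hAx hCx

/-- Validity of transferred optimality cuts: if strong duality holds
at the construction point `(b*, d*)` with optimal value `v*` and dual variables
`(μ*, π*)`, `π* ≥ 0`, then with `c* = v* + b*ᵀμ* + d*ᵀπ*`, for every new
right-hand side `(b', d')` the cut value `c* − b'ᵀμ* − d'ᵀπ*` is a lower bound on
the objective at every feasible point; in particular the dual gap
`v(b', d') − (c* − b'ᵀμ* − d'ᵀπ*)` is nonnegative whenever the subproblem with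
right-hand sides `(b', d')` is feasible with optimal value `v(b', d')`. -/
theorem transferred_optimality_cut_valid {n m p : ℕ}
    (Q : Matrix (Fin n) (Fin n) ℝ) (hQsym : Q.IsSymm) (hQpd : Q.PosDef)
    (A : Matrix (Fin m) (Fin n) ℝ) (C : Matrix (Fin p) (Fin n) ℝ)
    (xg : Fin n → ℝ)
    (μs : Fin m → ℝ) (πs : Fin p → ℝ) (hπ : ∀ i, 0 ≤ πs i)
    (bs : Fin m → ℝ) (ds : Fin p → ℝ) (vs : ℝ)
    (w : Fin n → ℝ) (hw : w = Aᵀ *ᵥ μs + Cᵀ *ᵥ πs)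
    (hstrong : vs = -(1 / 4 : ℝ) * (w ⬝ᵥ (Q⁻¹ *ᵥ w)) + xg ⬝ᵥ w - bs ⬝ᵥ μs - ds ⬝ᵥ πs)
    (cs : ℝ) (hcs : cs = vs + bs ⬝ᵥ μs + ds ⬝ᵥ πs) :
    (∀ (b' : Fin m → ℝ) (d' : Fin p → ℝ) (x : Fin n → ℝ),
        A *ᵥ x = b' → (∀ i, (C *ᵥ x) i ≤ d' i) →
        cs - b' ⬝ᵥ μs - d' ⬝ᵥ πs ≤ (x - xg) ⬝ᵥ (Q *ᵥ (x - xg))) ∧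
      (∀ (b' : Fin m → ℝ) (d' : Fin p → ℝ) (v' : ℝ),
        IsGLB {y : ℝ | ∃ x : Fin n → ℝ, A *ᵥ x = b' ∧ (∀ i, (C *ᵥ x) i ≤ d' i) ∧
          y = (x - xg) ⬝ᵥ (Q *ᵥ (x - xg))} v' →
        0 ≤ v' - (cs - b' ⬝ᵥ μs - d' ⬝ᵥ πs)) :=
  transferred_optimality_cut_valid_general Q hQpd A C xg μs πs hπ bs ds vs w hw hstrong cs hcs
end

section
/- (Backward-shift inner product identity.) Let δ_j : Fin N → ℝ^{n_δ} be a sequence, let T := {τ ∈ {1,…,N−1} : δ_j(τ) ≠ δ_j(τ−1)} be its set of mode transition indices, and let s' ≥ 1. Assume any two distinct transitions in T are separated by more than s' steps and every τ ∈ T satisfies τ + s' ≤ N. Let δ be the backward shift of δ_j by s' steps: δ(i) = δ_j(i − s') for i ≥ s' and δ(i) = δ_j(0) for i < s'. Then for any vectors ψ[0],…,ψ[N−1] ∈ ℝ^{n_δ}: Σ_{k=0}^{N−1} (δ(k) − δ_j(k))ᵀ ψ[k] = Σ_{τ ∈ T} Σ_{k=τ}^{τ+s'−1} (δ_j(τ−1)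 − δ_j(τ))ᵀ ψ[k]. -/
open Matrix

lemma noTrans {N nδ : ℕ} (δj : Fin N → Fin nδ → ℝ)
    (a b : ℕ) (hab : a ≤ b) (hb : b < N)
    (h : ∀ t : ℕ, a < t → t ≤ b → ∀ ht : t < N,
      δj ⟨t, ht⟩ = δj ⟨t - 1, lt_of_le_of_lt (Nat.sub_le _ _) ht⟩) :
    δj ⟨a, lt_of_le_of_lt hab hb⟩ = δj ⟨b, hb⟩ := by
  induction b with
  | zero =>
    have : a = 0 := Nat.le_zero.mp hab
    subst this; rfl
  | succ c ih =>
    rcases Nat.lt_or_ge a (c+1) with h1 | h1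
    · have hc : c < N := Nat.lt_of_succ_lt hb
      have hstep := h (c+1) h1 le_rfl hb
      have hac : a ≤ c := Nat.lt_succ_iff.mp h1
      have hrec := ih hac hc (fun t ht1 ht2 ht3 => h t ht1 (Nat.le_succ_of_le ht2) ht3)
      rw [hstep]
      simpa using hrec
    · have : a = c + 1 := le_antisymm hab h1
      subst this; rfl

lemma sum_dotProduct' {n α : Type*} [Fintype n] (s : Finset α) (f : α → n → ℝ)
    (w : n → ℝ) : (∑ a ∈ s, f a) ⬝ᵥ w = ∑ a ∈ s, f a ⬝ᵥ w := by
  simp only [dotProduct, Finset.sum_apply, Finset.sum_mul]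
  exact Finset.sum_comm

/-- Backward-shift inner product identity: if the mode transitions
of `δj` are pairwise separated by more than `s'` steps and each transition `τ`
satisfies `τ + s' ≤ N`, then for the backward shift `δ` of `δj` by `s'` steps and
any vectors `ψ[0], …, ψ[N−1]`:
`Σ_{k=0}^{N−1} (δ(k) − δj(k))ᵀψ[k]
  = Σ_{τ ∈ T} Σ_{k=τ}^{τ+s'−1} (δj(τ−1) − δj(τ))ᵀψ[k]`. -/
theorem backward_shift_inner_product_identity {N nδ : ℕ}
    (δj δ : Fin N → Fin nδ → ℝ) (s' : ℕ) (hs' : 1 ≤ s')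
    (T : Finset (Fin N))
    (hT : T = Finset.univ.filter (fun τ : Fin N => 0 < (τ : ℕ) ∧
      δj τ ≠ δj ⟨(τ : ℕ) - 1, lt_of_le_of_lt (Nat.sub_le _ _) τ.isLt⟩))
    (hsep : ∀ τ ∈ T, ∀ τ' ∈ T, (τ : ℕ) < (τ' : ℕ) → (τ : ℕ) + s' < (τ' : ℕ))
    (hbound : ∀ τ ∈ T, (τ : ℕ) + s' ≤ N)
    (hδ : δ = backShift s' δj)
    (ψ : ℕ → Fin nδ → ℝ) :
    ∑ k : Fin N, (δ k - δj k) ⬝ᵥ ψ (k : ℕ) =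
      ∑ τ ∈ T, ∑ k ∈ Finset.Ico (τ : ℕ) ((τ : ℕ) + s'),
        (δj ⟨(τ : ℕ) - 1, lt_of_le_of_lt (Nat.sub_le _ _) τ.isLt⟩ - δj τ) ⬝ᵥ ψ k := by
  set jump : Fin N → Fin nδ → ℝ :=
    fun τ => δj ⟨(τ : ℕ) - 1, lt_of_le_of_lt (Nat.sub_le _ _) τ.isLt⟩ - δj τ with hjump
  have memT : ∀ τ : Fin N, τ ∈ T ↔ 0 < (τ : ℕ) ∧
      δj τ ≠ δj ⟨(τ : ℕ) - 1, lt_of_le_of_lt (Nat.sub_le _ _) τ.isLt⟩ := by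
    intro τ; rw [hT]; simp
  -- if t ∉ T (as element of Fin N) and t > 0, then δj t = δj (t-1)
  have step : ∀ t : ℕ, 0 < t → ∀ ht : t < N, (⟨t, ht⟩ : Fin N) ∉ T →
      δj ⟨t, ht⟩ = δj ⟨t - 1, lt_of_le_of_lt (Nat.sub_le _ _) ht⟩ := by
    intro t ht0 ht hmem
    by_contra hne
    exact hmem ((memT ⟨t, ht⟩).mpr ⟨ht0, hne⟩)
  have hδk : ∀ k : Fin N, δ k = δj ⟨(k : ℕ) - s', lt_of_le_of_lt (Nat.sub_le _ _) k.isLt⟩ := by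
    intro k
    rw [hδ]; unfold backShift
    split_ifs with h
    · rfl
    · exact congrArg δj (Fin.ext (show 0 = (k : ℕ) - s' by omega))
  have key : ∀ k : Fin N, δ k - δj k =
      ∑ τ ∈ T.filter (fun τ : Fin N => (τ : ℕ) ≤ (k : ℕ) ∧ (k : ℕ) < (τ : ℕ) + s'),
        jump τ := by
    intro k
    by_cases hex : ∃ τ ∈ T, (τ : ℕ) ≤ (k : ℕ) ∧ (k : ℕ) < (τ : ℕ) + s'
    · obtain ⟨τ₀, hτ₀T, hle, hlt⟩ := hex
      have hτ₀pos : 0 < (τ₀ : ℕ) := ((memT τ₀).mp hτ₀T).1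
      have hfilter : T.filter (fun τ : Fin N => (τ : ℕ) ≤ (k : ℕ) ∧ (k : ℕ) < (τ : ℕ) + s')
          = {τ₀} := by
        ext τ
        simp only [Finset.mem_filter, Finset.mem_singleton]
        constructor
        · rintro ⟨hτT, h1, h2⟩
          by_contra hne
          rcases Nat.lt_trichotomy (τ : ℕ) (τ₀ : ℕ) with hc | hc | hc
          · have := hsep τ hτT τ₀ hτ₀T hc; omega
          · exact hne (Fin.ext hc)
          · have := hsep τ₀ hτ₀T τ hτT hc; omega
        · rintro rfl; exact ⟨hτ₀T, hle, hlt⟩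
      rw [hfilter, Finset.sum_singleton]
      -- δ k = δj (k - s') = δj (τ₀ - 1), and δj k = δj τ₀
      have h1 : δj ⟨(k : ℕ) - s', lt_of_le_of_lt (Nat.sub_le _ _) k.isLt⟩
          = δj ⟨(τ₀ : ℕ) - 1, lt_of_le_of_lt (Nat.sub_le _ _) τ₀.isLt⟩ := by
        have hab : (k : ℕ) - s' ≤ (τ₀ : ℕ) - 1 := by omega
        have hb : (τ₀ : ℕ) - 1 < N := lt_of_le_of_lt (Nat.sub_le _ _) τ₀.isLt
        have := noTrans δj ((k : ℕ) - s') ((τ₀ : ℕ) - 1) hab hb ?_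
        · exact this
        · intro t ht1 ht2 ht3
          apply step t (by omega) ht3
          intro hmem
          have := hsep ⟨t, ht3⟩ hmem τ₀ hτ₀T (show t < (τ₀ : ℕ) by omega)
          have h' : t + s' < (τ₀ : ℕ) := this
          omega
      have h2 : δj τ₀ = δj k := by
        have hb : (k : ℕ) < N := k.isLt
        have := noTrans δj (τ₀ : ℕ) (k : ℕ) hle hb ?_
        · calc δj τ₀ = δj ⟨(τ₀ : ℕ), lt_of_le_of_lt hle hb⟩ := by
                exact congrArg δj (Fin.ext rfl)
            _ = δj ⟨(k : ℕ), hb⟩ := this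
            _ = δj k := congrArg δj (Fin.ext rfl)
        · intro t ht1 ht2 ht3
          apply step t (by omega) ht3
          intro hmem
          have := hsep τ₀ hτ₀T ⟨t, ht3⟩ hmem (show (τ₀ : ℕ) < t by omega)
          have h' : (τ₀ : ℕ) + s' < t := this
          omega
      rw [hδk k, h1]
      simp only [hjump]
      rw [h2]
    · push_neg at hex
      have hfilter : T.filter (fun τ : Fin N => (τ : ℕ) ≤ (k : ℕ) ∧ (k : ℕ) < (τ : ℕ) + s')
          = ∅ := by
        ext τ
        simp only [Finset.mem_filter, Finset.notMem_empty, iff_false, not_and]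
        intro hτT h1 h2
        have := hex τ hτT h1
        omega
      rw [hfilter, Finset.sum_empty]
      have heq : δ k = δj k := by
        rw [hδk k]
        have hb : (k : ℕ) < N := k.isLt
        have hab : (k : ℕ) - s' ≤ (k : ℕ) := Nat.sub_le _ _
        have := noTrans δj ((k : ℕ) - s') (k : ℕ) hab hb ?_
        · rw [this]
        · intro t ht1 ht2 ht3
          apply step t (by omega) ht3
          intro hmem
          have := hex ⟨t, ht3⟩ hmem (show t ≤ (k : ℕ) from ht2)
          have h' : t + s' ≤ (k : ℕ) := this
          omega
      rw [heq, sub_self]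
  -- assemble
  calc ∑ k : Fin N, (δ k - δj k) ⬝ᵥ ψ (k : ℕ)
      = ∑ k : Fin N, ∑ τ ∈ T.filter (fun τ : Fin N => (τ : ℕ) ≤ (k : ℕ) ∧ (k : ℕ) < (τ : ℕ) + s'),
          jump τ ⬝ᵥ ψ (k : ℕ) := by
        refine Finset.sum_congr rfl fun k _ => ?_
        rw [key k, sum_dotProduct']
    _ = ∑ τ ∈ T, ∑ k ∈ Finset.univ.filter
          (fun k : Fin N => (τ : ℕ) ≤ (k : ℕ) ∧ (k : ℕ) < (τ : ℕ) + s'),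
          jump τ ⬝ᵥ ψ (k : ℕ) := by
        refine Finset.sum_comm' ?_
        intro k τ
        simp only [Finset.mem_filter, Finset.mem_univ, true_and, and_comm]
    _ = ∑ τ ∈ T, ∑ k ∈ Finset.Ico (τ : ℕ) ((τ : ℕ) + s'), jump τ ⬝ᵥ ψ k := by
        refine Finset.sum_congr rfl fun τ hτ => ?_
        rw [Finset.sum_filter,
          Fin.sum_univ_eq_sum_range
            (fun k => if (τ : ℕ) ≤ k ∧ k < (τ : ℕ) + s' then jump τ ⬝ᵥ ψ k else 0),
          ← Finset.sum_filter]
        congr 1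
        ext k
        simp only [Finset.mem_filter, Finset.mem_range, Finset.mem_Ico]
        have := hbound τ hτ
        omega
end

section
/- (Forward-shift inner product identity.) Let δ_j : Fin N → ℝ^{n_δ} be a sequence, let T := {τ ∈ {1,…,N−1} : δ_j(τ) ≠ δ_j(τ−1)} be its set of mode transition indices, and let s' ≥ 1. Assume any two distinct transitions in T are separated by more than s' steps and every τ ∈ T satisfies τ ≥ s'. Let δ be the forward shift of δ_j by s' steps: δ(i) = δ_j(i + s') for i ≤ N − 1 − s' and δ(i) = δ_j(N−1) for i > N − 1 − s'. Then for any vectors ψ[0],…,ψ[N−1] ∈ ℝ^{n_δ}: Σ_{k=0}^{N−1} (δ(k) − δ_j(k))ᵀ ψ[k] = Σ_{τ ∈ T} Σ_{k=τ−s'}^{τ−1} (δ_j(τ) − δ_j(τ−1))ᵀ ψ[k]. -/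
open Matrix

/-!
Let `Δ n = δj(n) − δj(n − 1)` be the jump of `δj` at `n`, extended by zero to `n ≥ N`. The shift
difference telescopes, `δ(k) − δj(k) = Σ_{k < n ≤ k+s'} Δ n`, and exchanging the order of
summation, the pairs `(k, n)` with `n` in the forward window of `k` are exactly those with `k` in
the backward window `[n − s', n)` of `n`. Only transitions have nonzero jumps.
-/

open Finset

theorem Finset.sum_range_sum_Ioc_eq_sum_range_sum_Ico {M : Type*} [AddCommMonoid M]
    (N s : ℕ) (f : ℕ → ℕ → M) (hf : ∀ n, N ≤ n → ∀ k, f n k = 0) :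
    ∑ k ∈ range N, ∑ n ∈ Ioc k (k + s), f n k = ∑ n ∈ range N, ∑ k ∈ Ico (n - s) n, f n k := by
  have h_inner (k : ℕ) :
      ∑ n ∈ Ioc k (k + s), f n k = ∑ n ∈ Ioc k (k + s) with n < N, f n k :=
    (sum_filter_of_ne fun n _ hn => by_contra fun hnN => hn (hf n (by omega) k)).symm
  simp_rw [h_inner]
  refine sum_comm' fun k n => ?_
  simp only [mem_range, mem_filter, mem_Ioc, mem_Ico]
  omega

theorem fwdShift_zero {N : ℕ} {V : Type*} (δ : Fin N → V) : fwdShift 0 δ = δ := by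
  ext i
  simp [fwdShift]

section Jump

variable {N : ℕ} {V : Type*} [AddCommGroup V]

def jump (δ : Fin N → V) (τ : Fin N) : V :=
  δ τ - δ ⟨(τ : ℕ) - 1, lt_of_le_of_lt (Nat.sub_le _ _) τ.isLt⟩

def jumpAt (δ : Fin N → V) (n : ℕ) : V :=
  if h : n < N then jump δ ⟨n, h⟩ else 0

theorem jumpAt_of_lt (δ : Fin N → V) {n : ℕ} (h : n < N) : jumpAt δ n = jump δ ⟨n, h⟩ :=
  dif_pos h

theorem jumpAt_of_le (δ : Fin N → V) {n : ℕ} (h : N ≤ n) : jumpAt δ n = 0 :=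
  dif_neg (Nat.not_lt.mpr h)

theorem pos_and_ne_of_jump_ne_zero {δ : Fin N → V} {τ : Fin N} (h : jump δ τ ≠ 0) :
    0 < (τ : ℕ) ∧ δ τ ≠ δ ⟨(τ : ℕ) - 1, lt_of_le_of_lt (Nat.sub_le _ _) τ.isLt⟩ := by
  refine ⟨Nat.pos_of_ne_zero fun hτ => h ?_, fun hδ => h (sub_eq_zero.mpr hδ)⟩
  rw [jump, sub_eq_zero]
  congr 1
  ext
  simp [hτ]

theorem fwdShift_succ_sub_fwdShift (δ : Fin N → V) (s : ℕ) (k : Fin N) :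
    fwdShift (s + 1) δ k - fwdShift s δ k = jumpAt δ (k + s + 1) := by
  unfold fwdShift jumpAt jump
  by_cases h₁ : (k : ℕ) + s + 1 < N
  · simp [← add_assoc, h₁, Nat.lt_of_succ_lt h₁]
  by_cases h₂ : (k : ℕ) + s < N
  · have hlast : N - 1 = k + s := by omega
    simp [← add_assoc, h₁, h₂, hlast]
  · simp [← add_assoc, h₁, h₂]

theorem fwdShift_sub_eq_sum_jumpAt (δ : Fin N → V) (s : ℕ) (k : Fin N) :
    fwdShift s δ k - δ k = ∑ n ∈ Ioc (k : ℕ) (k + s), jumpAt δ n := by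
  induction s with
  | zero => simp [fwdShift_zero]
  | succ s ih =>
    rw [← add_assoc, sum_Ioc_succ_top (Nat.le_add_right _ _), ← ih,
      ← fwdShift_succ_sub_fwdShift]
    abel

end Jump

theorem forward_shift_inner_product_identity_general {N nδ : ℕ}
    (δj δ : Fin N → Fin nδ → ℝ) (s' : ℕ)
    (T : Finset (Fin N))
    (hT : T = Finset.univ.filter (fun τ : Fin N => 0 < (τ : ℕ) ∧
      δj τ ≠ δj ⟨(τ : ℕ) - 1, lt_of_le_of_lt (Nat.sub_le _ _) τ.isLt⟩))
    (hδ : δ = fwdShift s' δj)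
    (ψ : ℕ → Fin nδ → ℝ) :
    ∑ k : Fin N, (δ k - δj k) ⬝ᵥ ψ (k : ℕ) =
      ∑ τ ∈ T, ∑ k ∈ Finset.Ico ((τ : ℕ) - s') (τ : ℕ),
        (δj τ - δj ⟨(τ : ℕ) - 1, lt_of_le_of_lt (Nat.sub_le _ _) τ.isLt⟩) ⬝ᵥ ψ k := by
  subst hT hδ
  calc ∑ k : Fin N, (fwdShift s' δj k - δj k) ⬝ᵥ ψ k
      = ∑ k ∈ range N, ∑ n ∈ Ioc k (k + s'), jumpAt δj n ⬝ᵥ ψ k := by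
        simp_rw [fwdShift_sub_eq_sum_jumpAt, sum_dotProduct]
        exact Fin.sum_univ_eq_sum_range (fun k => ∑ n ∈ Ioc k (k + s'), jumpAt δj n ⬝ᵥ ψ k) N
    _ = ∑ n ∈ range N, ∑ k ∈ Ico (n - s') n, jumpAt δj n ⬝ᵥ ψ k :=
        sum_range_sum_Ioc_eq_sum_range_sum_Ico N s' _ fun n hn k => by
          rw [jumpAt_of_le δj hn, zero_dotProduct]
    _ = ∑ τ : Fin N, ∑ k ∈ Ico ((τ : ℕ) - s') τ, jump δj τ ⬝ᵥ ψ k := by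
        rw [← Fin.sum_univ_eq_sum_range]
        simp only [jumpAt_of_lt δj (Fin.is_lt _)]
    _ = _ := by
        refine (sum_filter_of_ne fun τ _ hτ => pos_and_ne_of_jump_ne_zero fun h => hτ ?_).symm
        simp [h]

/-- Forward-shift inner product identity: if the mode transitions
of `δj` are pairwise separated by more than `s'` steps and each transition `τ`
satisfies `τ ≥ s'`, then for the forward shift `δ` of `δj` by `s'` steps and any
vectors `ψ[0], …, ψ[N−1]`:
`Σ_{k=0}^{N−1} (δ(k) − δj(k))ᵀψ[k]
  = Σ_{τ ∈ T} Σ_{k=τ−s'}^{τ−1} (δj(τ) − δj(τ−1))ᵀψ[k]`. -/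
theorem forward_shift_inner_product_identity {N nδ : ℕ}
    (δj δ : Fin N → Fin nδ → ℝ) (s' : ℕ) (hs' : 1 ≤ s')
    (T : Finset (Fin N))
    (hT : T = Finset.univ.filter (fun τ : Fin N => 0 < (τ : ℕ) ∧
      δj τ ≠ δj ⟨(τ : ℕ) - 1, lt_of_le_of_lt (Nat.sub_le _ _) τ.isLt⟩))
    (hsep : ∀ τ ∈ T, ∀ τ' ∈ T, (τ : ℕ) < (τ' : ℕ) → (τ : ℕ) + s' < (τ' : ℕ))
    (hbound : ∀ τ ∈ T, s' ≤ (τ : ℕ))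
    (hδ : δ = fwdShift s' δj)
    (ψ : ℕ → Fin nδ → ℝ) :
    ∑ k : Fin N, (δ k - δj k) ⬝ᵥ ψ (k : ℕ) =
      ∑ τ ∈ T, ∑ k ∈ Finset.Ico ((τ : ℕ) - s') (τ : ℕ),
        (δj τ - δj ⟨(τ : ℕ) - 1, lt_of_le_of_lt (Nat.sub_le _ _) τ.isLt⟩) ⬝ᵥ ψ k :=
  forward_shift_inner_product_identity_general δj δ s' T hT hδ ψ
end

section
/- (Corollary: α-suboptimality at the first Benders Master Problem solve.) Let S be a nonempty finite set, v : S → ℝ, and let {z_j}_{j ∈ J} be a nonempty finite family of functions z_j : S → ℝ with z_j(δ) ≤ v(δ) for all j ∈ J and δ ∈ S. Let α ≥ 0 and assume the covering condition: for every δ ∈ S there exists j ∈ J with v(δ) − z_j(δ) < α. Let δ' ∈ S be a global minimizer over S of the cut envelope δ ↦ max_{j ∈ J} z_j(δ). Then δ' is α-suboptimal: v(δ') − min_{δ ∈ S} v(δ) ≤ α. -/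
/-- α-suboptimality at the first Benders Master Problem solve:
if every stored cut is a lower bound on `v` and the covering condition holds
(every `δ` admits a cut with dual gap below `α`), then any global minimizer `δ'`
of the cut envelope `δ ↦ max_j z j δ` is `α`-suboptimal:
`v δ' − min_{δ ∈ S} v δ ≤ α`. -/
theorem first_bmp_solve_alpha_suboptimal {S J : Type*}
    [Fintype S] [Nonempty S] [Fintype J] [Nonempty J]
    (v : S → ℝ) (z : J → S → ℝ) (hlb : ∀ (j : J) (δ : S), z j δ ≤ v δ)
    (α : ℝ) (hα : 0 ≤ α)
    (hcover : ∀ δ : S, ∃ j : J, v δ - z j δ < α)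
    (δ' : S)
    (hmin : ∀ δ : S,
      Finset.univ.sup' Finset.univ_nonempty (fun j => z j δ') ≤
        Finset.univ.sup' Finset.univ_nonempty (fun j => z j δ)) :
    v δ' - Finset.univ.inf' Finset.univ_nonempty v ≤ α := by
  obtain ⟨δs, -, hδs⟩ := Finset.exists_mem_eq_inf' (Finset.univ_nonempty (α := S)) v
  rw [hδs]
  obtain ⟨j, hj⟩ := hcover δ'
  have h1 : z j δ' ≤ Finset.univ.sup' Finset.univ_nonempty (fun j => z j δ') :=
    Finset.le_sup' (fun j => z j δ') (Finset.mem_univ j)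
  have h2 : Finset.univ.sup' Finset.univ_nonempty (fun j => z j δs) ≤ v δs := by
    apply Finset.sup'_le
    intro i _
    exact hlb i δs
  linarith [hmin δs]
end
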